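/- Fix a continuous function B : [0,∞) → ℝ with B(0) = 0, parameters a ∈ ℝ, σ > 0 and an initial value Y₀ > 0. Let 0 < k₁ < k₂ and let Y₁ and Y₂ be stopped solutions with parameters k₁ and k₂ respectively (driven by the same B and starting from the same Y₀), with zero-hitting times τ₁ = inf{t ≥ 0 : Y₁(t) = 0} and τ₂ = inf{t ≥ 0 : Y₂(t) = 0}. Then τ₁ ≤ τ₂. -/
import Mathlib


open scoped ENNReal

/-- The first zero-hitting time `τ = inf{t ≥ 0 : Y t = 0}` of a path `Y`, as an extended
nonnegative real (with `τ = ∞` if `Y` never vanishes on `[0,∞)`). -/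
noncomputable def zeroHitTime (Y : ℝ → ℝ) : ℝ≥0∞ :=
  ⨅ t ∈ {t : ℝ | 0 ≤ t ∧ Y t = 0}, ENNReal.ofReal t

/-- A stopped solution of `dY = (1/2)(k/Y − aY) dt + (σ/2) dB`, `Y 0 = Y₀`, driven by the
path `B`: a continuous function on `[0,∞)` satisfying the integral equation before its
first zero-hitting time `τ` and vanishing from `τ` onwards. -/
def IsStoppedSolution (B : ℝ → ℝ) (k a σ Y₀ : ℝ) (Y : ℝ → ℝ) : Prop :=
  ContinuousOn Y (Set.Ici 0) ∧ Y 0 = Y₀ ∧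
  (∀ t : ℝ, 0 ≤ t → ENNReal.ofReal t < zeroHitTime Y →
    Y t = Y₀ + (1 / 2) * (∫ s in (0:ℝ)..t, (k / Y s - a * Y s)) + (σ / 2) * B t) ∧
  (∀ t : ℝ, 0 ≤ t → zeroHitTime Y ≤ ENNReal.ofReal t → Y t = 0)

lemma zeroHitTime_le' {Y : ℝ → ℝ} {s : ℝ} (hs : 0 ≤ s) (hz : Y s = 0) :
    zeroHitTime Y ≤ ENNReal.ofReal s :=
  iInf₂_le s ⟨hs, hz⟩

lemma pos_before_hit {Y : ℝ → ℝ} (hc : ContinuousOn Y (Set.Ici 0))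
    (hY0 : 0 < Y 0) {t : ℝ} (ht : 0 ≤ t) (hlt : ENNReal.ofReal t < zeroHitTime Y) :
    0 < Y t := by
  by_contra hle
  push_neg at hle
  rcases eq_or_lt_of_le hle with heq | hlt'
  · exact absurd (zeroHitTime_le' ht heq) (not_le.2 hlt)
  · have h0 : (0:ℝ) ∈ Set.Icc (Y t) (Y 0) := ⟨hlt'.le, hY0.le⟩
    obtain ⟨s, hs, hs0⟩ := intermediate_value_Icc' ht (hc.mono Set.Icc_subset_Ici_self) h0
    have h1 : zeroHitTime Y ≤ ENNReal.ofReal s := zeroHitTime_le' hs.1 hs0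
    have h2 : ENNReal.ofReal s ≤ ENNReal.ofReal t := ENNReal.ofReal_le_ofReal hs.2
    exact absurd (h1.trans h2) (not_le.2 hlt)

/-- comparison of hitting times: for two stopped solutions driven by the
same path and started at the same `Y₀ > 0`, with parameters `0 < k₁ < k₂`, the
zero-hitting times satisfy `τ₁ ≤ τ₂` (in the extended reals). -/
theorem fCIR_hitting_time_comparison (B : ℝ → ℝ) (hBcont : Continuous B) (hB0 : B 0 = 0)
    (a σ Y₀ k₁ k₂ : ℝ) (hσ : 0 < σ) (hY₀ : 0 < Y₀) (hk₁ : 0 < k₁) (hk : k₁ < k₂)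
    (Y₁ Y₂ : ℝ → ℝ)
    (h₁ : IsStoppedSolution B k₁ a σ Y₀ Y₁) (h₂ : IsStoppedSolution B k₂ a σ Y₀ Y₂) :
    zeroHitTime Y₁ ≤ zeroHitTime Y₂ := by
  obtain ⟨hc₁, hY₁0, hEq₁, -⟩ := h₁
  obtain ⟨hc₂, hY₂0, hEq₂, -⟩ := h₂
  refine le_iInf₂ fun t ht => ?_
  obtain ⟨ht0, htz⟩ := ht
  by_contra hcon
  push_neg at hcon
  -- first zero of Y₂ in [0, t]
  set Z : Set ℝ := Set.Icc 0 t ∩ Y₂ ⁻¹' {0} with hZ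
  have hZne : Z.Nonempty := ⟨t, ⟨ht0, le_refl t⟩, htz⟩
  have hZclosed : IsClosed Z :=
    (hc₂.mono Set.Icc_subset_Ici_self).preimage_isClosed_of_isClosed isClosed_Icc
      isClosed_singleton
  have hZcomp : IsCompact Z := isCompact_Icc.of_isClosed_subset hZclosed Set.inter_subset_left
  set r := sInf Z with hrdef
  have hrZ : r ∈ Z := hZcomp.sInf_mem hZne
  have hr0t : r ∈ Set.Icc 0 t := hrZ.1
  have hY₂r : Y₂ r = 0 := hrZ.2
  have hr0 : 0 < r := by
    rcases hr0t.1.lt_or_eq with h | h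
    · exact h
    · exfalso
      rw [← h] at hY₂r
      rw [hY₂0] at hY₂r
      exact hY₀.ne' hY₂r
  have hτ₂ : ENNReal.ofReal r ≤ zeroHitTime Y₂ := by
    refine le_iInf₂ fun s hs => ENNReal.ofReal_le_ofReal ?_
    rcases le_or_gt s t with h | h
    · exact csInf_le hZcomp.bddBelow ⟨⟨hs.1, h⟩, hs.2⟩
    · exact hr0t.2.trans h.le
  have hY₂pos : ∀ s, 0 ≤ s → s < r → 0 < Y₂ s := fun s hs hsr =>
    pos_before_hit hc₂ (by rw [hY₂0]; exact hY₀) hs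
      (lt_of_lt_of_le ((ENNReal.ofReal_lt_ofReal_iff hr0).2 hsr) hτ₂)
  have hY₁pos : ∀ s, 0 ≤ s → s ≤ r → 0 < Y₁ s := fun s hs hsr =>
    pos_before_hit hc₁ (by rw [hY₁0]; exact hY₀) hs
      (lt_of_le_of_lt (ENNReal.ofReal_le_ofReal (hsr.trans hr0t.2)) hcon)
  have hEq₁' : ∀ s, 0 ≤ s → s ≤ r →
      Y₁ s = Y₀ + (1 / 2) * (∫ u in (0:ℝ)..s, (k₁ / Y₁ u - a * Y₁ u)) + (σ / 2) * B s :=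
    fun s hs hsr =>
      hEq₁ s hs (lt_of_le_of_lt (ENNReal.ofReal_le_ofReal (hsr.trans hr0t.2)) hcon)
  have hEq₂' : ∀ s, 0 ≤ s → s < r →
      Y₂ s = Y₀ + (1 / 2) * (∫ u in (0:ℝ)..s, (k₂ / Y₂ u - a * Y₂ u)) + (σ / 2) * B s :=
    fun s hs hsr =>
      hEq₂ s hs (lt_of_lt_of_le ((ENNReal.ofReal_lt_ofReal_iff hr0).2 hsr) hτ₂)
  -- the difference of the drifts
  set g : ℝ → ℝ := fun u => (k₂ / Y₂ u - a * Y₂ u) - (k₁ / Y₁ u - a * Y₁ u) with hg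
  have hc₁' : ContinuousOn Y₁ (Set.Ico 0 r) := hc₁.mono Set.Ico_subset_Ici_self
  have hc₂' : ContinuousOn Y₂ (Set.Ico 0 r) := hc₂.mono Set.Ico_subset_Ici_self
  have hcf₂ : ContinuousOn (fun u => k₂ / Y₂ u - a * Y₂ u) (Set.Ico 0 r) :=
    (continuousOn_const.div hc₂' fun u hu => (hY₂pos u hu.1 hu.2).ne').sub
      (continuousOn_const.mul hc₂')
  have hcf₁ : ContinuousOn (fun u => k₁ / Y₁ u - a * Y₁ u) (Set.Ico 0 r) :=
    (continuousOn_const.div hc₁' fun u hu => (hY₁pos u hu.1 hu.2.le).ne').sub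
      (continuousOn_const.mul hc₁')
  have hcg : ContinuousOn g (Set.Ico 0 r) := hcf₂.sub hcf₁
  have hIccIco : ∀ s : ℝ, s < r → Set.Icc (0:ℝ) s ⊆ Set.Ico 0 r := fun s hsr u hu =>
    ⟨hu.1, lt_of_le_of_lt hu.2 hsr⟩
  -- integral representation of the difference
  have hD : ∀ s, 0 ≤ s → s < r →
      Y₂ s - Y₁ s = (1 / 2) * ∫ u in (0:ℝ)..s, g u := by
    intro s hs hsr
    have hint₂ : IntervalIntegrable (fun u => k₂ / Y₂ u - a * Y₂ u) MeasureTheory.volume 0 s := by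
      apply ContinuousOn.intervalIntegrable
      rw [Set.uIcc_of_le hs]
      exact hcf₂.mono (hIccIco s hsr)
    have hint₁ : IntervalIntegrable (fun u => k₁ / Y₁ u - a * Y₁ u) MeasureTheory.volume 0 s := by
      apply ContinuousOn.intervalIntegrable
      rw [Set.uIcc_of_le hs]
      exact hcf₁.mono (hIccIco s hsr)
    have hsub := intervalIntegral.integral_sub hint₂ hint₁
    rw [hEq₂' s hs hsr, hEq₁' s hs hsr.le, hg]
    simp only []
    rw [hsub]
    ring
  -- nonnegativity of the difference on [0, r)
  have hDnn : ∀ s, 0 ≤ s → s < r → 0 ≤ Y₂ s - Y₁ s := by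
    by_contra hcon2
    push_neg at hcon2
    obtain ⟨t₀, ht₀0, ht₀r, hDt₀⟩ := hcon2
    have hD00 : Y₂ 0 - Y₁ 0 = 0 := by rw [hY₁0, hY₂0, sub_self]
    have ht₀pos : 0 < t₀ := by
      rcases ht₀0.lt_or_eq with h | h
      · exact h
      · exfalso; rw [← h, hD00] at hDt₀; exact lt_irrefl 0 hDt₀
    -- last time before t₀ where the difference is nonnegative
    set A : Set ℝ := Set.Icc 0 t₀ ∩ (fun s => Y₂ s - Y₁ s) ⁻¹' Set.Ici 0 with hA
    have hDcont : ContinuousOn (fun s => Y₂ s - Y₁ s) (Set.Icc 0 t₀) :=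
      (hc₂.sub hc₁).mono Set.Icc_subset_Ici_self
    have hAne : A.Nonempty := ⟨0, ⟨le_refl 0, ht₀0⟩, by simp [hD00]⟩
    have hAclosed : IsClosed A :=
      hDcont.preimage_isClosed_of_isClosed isClosed_Icc isClosed_Ici
    have hAcomp : IsCompact A := isCompact_Icc.of_isClosed_subset hAclosed Set.inter_subset_left
    set s₀ := sSup A with hs₀def
    have hs₀A : s₀ ∈ A := hAcomp.sSup_mem hAne
    have hs₀nn : 0 ≤ Y₂ s₀ - Y₁ s₀ := hs₀A.2
    have hs₀0 : 0 ≤ s₀ := hs₀A.1.1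
    have hs₀t₀ : s₀ < t₀ := by
      rcases hs₀A.1.2.lt_or_eq with h | h
      · exact h
      · exfalso; rw [h] at hs₀nn; exact absurd hDt₀ (not_lt.2 hs₀nn)
    have hneg : ∀ s, s₀ < s → s ≤ t₀ → Y₂ s - Y₁ s < 0 := by
      intro s hs hst
      by_contra hge
      push_neg at hge
      have hsA : s ∈ A := ⟨⟨hs₀0.trans hs.le, hst⟩, hge⟩
      exact absurd (le_csSup hAcomp.bddAbove hsA) (not_le.2 hs)
    have hs₀D : Y₂ s₀ - Y₁ s₀ = 0 := by
      refine le_antisymm ?_ hs₀nn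
      have hcw : ContinuousWithinAt (fun s => Y₂ s - Y₁ s) (Set.Ioc s₀ t₀) s₀ :=
        (hDcont s₀ hs₀A.1).mono (fun u hu => ⟨hs₀0.trans hu.1.le, hu.2⟩)
      haveI : (nhdsWithin s₀ (Set.Ioc s₀ t₀)).NeBot := by
        refine mem_closure_iff_nhdsWithin_neBot.1 ?_
        rw [closure_Ioc hs₀t₀.ne]
        exact ⟨le_refl s₀, hs₀t₀.le⟩
      refine le_of_tendsto hcw ?_
      filter_upwards [self_mem_nhdsWithin] with s hs
      exact (hneg s hs.1 hs.2).le
    -- exponentially weighted difference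
    set E : ℝ → ℝ := fun s => Real.exp (a * s / 2) * (Y₂ s - Y₁ s) with hE
    have ht₀ltr : t₀ < r := ht₀r
    have hEmono : StrictMonoOn E (Set.Icc s₀ t₀) := by
      apply strictMonoOn_of_deriv_pos (convex_Icc _ _)
      · exact (Real.continuous_exp.comp (by fun_prop)).continuousOn.mul
          (hDcont.mono (Set.Icc_subset_Icc hs₀0 le_rfl))
      · intro x hx
        rw [interior_Icc] at hx
        have hx0 : 0 < x := lt_of_le_of_lt hs₀0 hx.1
        have hxr : x < r := hx.2.trans ht₀ltr
        have hgIoo : ContinuousOn g (Set.Ioo 0 r) := hcg.mono Set.Ioo_subset_Ico_self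
        have hcontg_at : ContinuousAt g x :=
          hgIoo.continuousAt (isOpen_Ioo.mem_nhds ⟨hx0, hxr⟩)
        have hmeas : StronglyMeasurableAtFilter g (nhds x) :=
          hgIoo.stronglyMeasurableAtFilter isOpen_Ioo x ⟨hx0, hxr⟩
        have hint : IntervalIntegrable g MeasureTheory.volume 0 x := by
          apply ContinuousOn.intervalIntegrable
          rw [Set.uIcc_of_le hx0.le]
          exact hcg.mono (hIccIco x hxr)
        have hG : HasDerivAt (fun s => ∫ u in (0:ℝ)..s, g u) (g x) x :=
          intervalIntegral.integral_hasDerivAt_right hint hmeas hcontg_at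
        have hG2 : HasDerivAt (fun s => (1:ℝ) / 2 * ∫ u in (0:ℝ)..s, g u)
            ((1:ℝ) / 2 * g x) x := hG.const_mul _
        have h1 : HasDerivAt (fun s : ℝ => a * s / 2) (a / 2) x := by
          simpa using ((hasDerivAt_id x).const_mul a).div_const 2
        have hexp : HasDerivAt (fun s => Real.exp (a * s / 2))
            (Real.exp (a * x / 2) * (a / 2)) x := h1.exp
        have hEG : HasDerivAt
            (fun s => Real.exp (a * s / 2) * ((1:ℝ) / 2 * ∫ u in (0:ℝ)..s, g u))
            (Real.exp (a * x / 2) * (a / 2) * ((1:ℝ) / 2 * ∫ u in (0:ℝ)..x, g u)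
              + Real.exp (a * x / 2) * ((1:ℝ) / 2 * g x)) x := hexp.mul hG2
        have hEqEv : E =ᶠ[nhds x]
            (fun s => Real.exp (a * s / 2) * ((1:ℝ) / 2 * ∫ u in (0:ℝ)..s, g u)) := by
          filter_upwards [isOpen_Ioo.mem_nhds (⟨hx0, hxr⟩ : x ∈ Set.Ioo 0 r)] with s hs
          rw [hE]
          simp only []
          rw [hD s hs.1.le hs.2]
        have hEderiv : HasDerivAt E
            (Real.exp (a * x / 2) * (a / 2) * ((1:ℝ) / 2 * ∫ u in (0:ℝ)..x, g u)
              + Real.exp (a * x / 2) * ((1:ℝ) / 2 * g x)) x :=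
          hEG.congr_of_eventuallyEq hEqEv
        rw [hEderiv.deriv]
        have hDx : (1:ℝ) / 2 * ∫ u in (0:ℝ)..x, g u = Y₂ x - Y₁ x := (hD x hx0.le hxr).symm
        rw [hDx]
        have hY₂x : 0 < Y₂ x := hY₂pos x hx0.le hxr
        have hY₁x : 0 < Y₁ x := hY₁pos x hx0.le hxr.le
        have hDxneg : Y₂ x - Y₁ x < 0 := hneg x hx.1 hx.2.le
        have hY21 : Y₂ x < Y₁ x := by linarith
        have hkey : k₁ / Y₁ x < k₂ / Y₂ x := by
          rw [div_lt_div_iff₀ hY₁x hY₂x]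
          nlinarith
        have hcomb : Real.exp (a * x / 2) * (a / 2) * (Y₂ x - Y₁ x)
            + Real.exp (a * x / 2) * ((1:ℝ) / 2 * g x)
            = Real.exp (a * x / 2) / 2 * (k₂ / Y₂ x - k₁ / Y₁ x) := by
          rw [hg]; ring
        rw [hcomb]
        exact mul_pos (by positivity) (sub_pos.2 hkey)
    have hlt := hEmono (Set.left_mem_Icc.2 hs₀t₀.le) (Set.right_mem_Icc.2 hs₀t₀.le) hs₀t₀
    have hE1 : E s₀ = 0 := by rw [hE]; simp only []; rw [hs₀D, mul_zero]
    have hE2 : E t₀ < 0 := mul_neg_of_pos_of_neg (Real.exp_pos _) hDt₀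
    rw [hE1] at hlt
    exact absurd hlt (not_lt.2 hE2.le)
  -- conclude: Y₁ r ≤ Y₂ r = 0 by continuity, contradicting positivity of Y₁ at r
  have hY₁r : 0 < Y₁ r := hY₁pos r hr0t.1 le_rfl
  have hcw : ContinuousWithinAt (fun s => Y₂ s - Y₁ s) (Set.Ico 0 r) r :=
    (((hc₂.sub hc₁).mono Set.Icc_subset_Ici_self) r (Set.right_mem_Icc.2 hr0t.1)).mono
      Set.Ico_subset_Icc_self
  haveI : (nhdsWithin r (Set.Ico 0 r)).NeBot := by
    refine mem_closure_iff_nhdsWithin_neBot.1 ?_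
    rw [closure_Ico hr0.ne]
    exact ⟨hr0t.1, le_refl r⟩
  have hle0 : 0 ≤ Y₂ r - Y₁ r := by
    refine ge_of_tendsto hcw ?_
    filter_upwards [self_mem_nhdsWithin] with s hs
    exact hDnn s hs.1 hs.2
  rw [hY₂r] at hle0
  linarith
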